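/- If A, B are n×n matrices over a commutative ELT ring and B is invertible (in the monoid of matrices over R̄), then det(AB) = det(A)·det(B). -/

import Mathlib

/-!
Over `R̄` a sum vanishes only if every summand does and a product vanishes only if a factor
does. Hence `B * C = 1 = C * B` forces `B` to be a monomial matrix: one nonzero entry `B i (σ i)`
in each row, for a permutation `σ`. Right multiplication by such a matrix permutes the columns
of `A` and rescales them, so the permutation expansion of `det (A * B)` is a reindexing of the
one for `det A`, with the factor `sgn σ * ∏ i, B i (σ i) = det B` pulled out. No cancellation
(and hence no negation) is needed.
-/

/-- ELT addition on pairs (tangible value, layer). -/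
def eltAdd {F L : Type*} [LinearOrder F] [Add L] (x y : F × L) : F × L :=
  if y.1 < x.1 then x else if x.1 < y.1 then y else (x.1, x.2 + y.2)

/-- ELT multiplication on pairs (tangible value, layer). -/
def eltMul {F L : Type*} [Add F] [Mul L] (x y : F × L) : F × L :=
  (x.1 + y.1, x.2 * y.2)

/-- Addition on R̄ = R ∪ {−∞}. -/
def eAdd {F L : Type*} [LinearOrder F] [Add L] :
    Option (F × L) → Option (F × L) → Option (F × L)
  | none, y => y
  | some a, none => some a
  | some a, some b => some (eltAdd a b)

/-- Multiplication on R̄ = R ∪ {−∞}. -/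
def eMul {F L : Type*} [Add F] [Mul L] :
    Option (F × L) → Option (F × L) → Option (F × L)
  | some a, some b => some (eltMul a b)
  | _, _ => none

/-- The layer (sorting map) on R̄; the layer of −∞ is 0. -/
def sBar {F L : Type*} [Zero L] (x : Option (F × L)) : L :=
  (x.map Prod.snd).getD 0

/-- The surpassing relation on R̄. -/
def eSurp {F L : Type*} [LinearOrder F] [Add L] [Zero L]
    (x y : Option (F × L)) : Prop :=
  ∃ z : Option (F × L), sBar z = 0 ∧ x = eAdd y z

/-- Finite sums in R̄ (the result is independent of the enumeration order since
`eAdd` is commutative and associative with identity −∞). -/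
noncomputable def eSumF {F L α : Type*} [Fintype α] [LinearOrder F] [Add L]
    (f : α → Option (F × L)) : Option (F × L) :=
  ((Finset.univ : Finset α).toList.map f).foldr eAdd none

/-- Finite products in R̄. -/
def eProd {F L : Type*} [Zero F] [Add F] [One L] [Mul L] {k : ℕ}
    (f : Fin k → Option (F × L)) : Option (F × L) :=
  (List.ofFn f).foldr eMul (some ((0 : F), (1 : L)))

/-- The ELT determinant, with sgn(σ) interpreted as the layer element (0, ±1). -/
noncomputable def eltDet {F L : Type*} [AddCommGroup F] [LinearOrder F] [IsOrderedAddMonoid F] [CommRing L] {n : ℕ}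
    (A : Matrix (Fin n) (Fin n) (Option (F × L))) : Option (F × L) :=
  eSumF fun σ : Equiv.Perm (Fin n) =>
    eMul (some ((0 : F), ((Equiv.Perm.sign σ : ℤ) : L))) (eProd fun i => A i (σ i))

/-- Matrix multiplication over R̄. -/
noncomputable def eMatMul {F L : Type*} [AddCommGroup F] [LinearOrder F] [IsOrderedAddMonoid F] [CommRing L] {n : ℕ}
    (A B : Matrix (Fin n) (Fin n) (Option (F × L))) :
    Matrix (Fin n) (Fin n) (Option (F × L)) :=
  fun i j => eSumF fun k => eMul (A i k) (B k j)

/-- The identity matrix over R̄. -/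
def eId {F L : Type*} [AddCommGroup F] [LinearOrder F] [IsOrderedAddMonoid F] [CommRing L] (n : ℕ) :
    Matrix (Fin n) (Fin n) (Option (F × L)) :=
  fun i j => if i = j then some ((0 : F), (1 : L)) else none

open Equiv Finset

namespace Matrix

variable {n S : Type*} [Fintype n]

def detWith [DecidableEq n] [CommSemiring S] (ε : ℤˣ →* S) (M : Matrix n n S) : S :=
  ∑ σ : Perm n, ε (Perm.sign σ) * ∏ i, M i (σ i)

theorem mul_apply_eq_zero_iff [Semiring S] [NoZeroDivisors S] [Subsingleton (AddUnits S)]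
    (A B : Matrix n n S) (i j : n) : (A * B) i j = 0 ↔ ∀ k, A i k = 0 ∨ B k j = 0 := by
  simp only [mul_apply, sum_eq_zero_iff, mem_univ, true_implies, mul_eq_zero]

theorem exists_perm_forall_ne_eq_zero_of_mul_eq_one [DecidableEq n] [Semiring S]
    [NoZeroDivisors S] [Subsingleton (AddUnits S)] [Nontrivial S] {B C : Matrix n n S}
    (hBC : B * C = 1) (hCB : C * B = 1) : ∃ σ : Perm n, ∀ i j, j ≠ σ i → B i j = 0 := by
  have hrow : ∀ i, ∃ k, B i k ≠ 0 ∧ C k i ≠ 0 := fun i => by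
    have hii : (B * C) i i ≠ 0 := by simp [hBC]
    obtain ⟨k, -, hk⟩ := exists_ne_zero_of_sum_ne_zero hii
    exact ⟨k, left_ne_zero_of_mul hk, right_ne_zero_of_mul hk⟩
  choose s hBs hCs using hrow
  have hs : Function.Injective s := fun i j hij => by
    by_contra hne
    have hoff : (B * C) i j = 0 := by simp [hBC, hne]
    rcases (mul_apply_eq_zero_iff B C i j).1 hoff (s j) with h | h
    · exact hBs i (hij ▸ h)
    · exact hCs j h
  refine ⟨Equiv.ofBijective s (Finite.injective_iff_bijective.mp hs), fun i j hj => ?_⟩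
  have hoff : (C * B) (s i) j = 0 := by simp [hCB, (Ne.symm hj : s i ≠ j)]
  exact ((mul_apply_eq_zero_iff C B _ _).1 hoff i).resolve_left (hCs i)

section PermSupport

variable {σ : Perm n}

theorem mul_apply_of_forall_ne_eq_zero [NonUnitalNonAssocSemiring S] (A : Matrix n n S)
    {B : Matrix n n S} (hB : ∀ i j, j ≠ σ i → B i j = 0) (i j : n) :
    (A * B) i j = A i (σ.symm j) * B (σ.symm j) j := by
  rw [mul_apply, Fintype.sum_eq_single (σ.symm j)]
  intro k hk
  rw [hB k j fun h => hk (by simp [h]), mul_zero]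

theorem detWith_of_forall_ne_eq_zero [DecidableEq n] [CommSemiring S] (ε : ℤˣ →* S)
    {B : Matrix n n S} (hB : ∀ i j, j ≠ σ i → B i j = 0) :
    detWith ε B = ε (Perm.sign σ) * ∏ i, B i (σ i) := by
  refine Fintype.sum_eq_single σ fun τ hτ => ?_
  obtain ⟨i, hi⟩ : ∃ i, τ i ≠ σ i := by
    by_contra! h
    exact hτ (Equiv.ext h)
  rw [prod_eq_zero (mem_univ i) (hB i (τ i) hi), mul_zero]

theorem detWith_mul_of_forall_ne_eq_zero [DecidableEq n] [CommSemiring S] (ε : ℤˣ →* S)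
    (A : Matrix n n S) {B : Matrix n n S} (hB : ∀ i j, j ≠ σ i → B i j = 0) :
    detWith ε (A * B) = detWith ε A * detWith ε B := by
  have hterm : ∀ π : Perm n, ε (Perm.sign (σ * π)) * ∏ i, (A * B) i ((σ * π) i) =
      (ε (Perm.sign π) * ∏ i, A i (π i)) * (ε (Perm.sign σ) * ∏ i, B i (σ i)) := fun π => by
    simp only [mul_apply_of_forall_ne_eq_zero A hB, Perm.mul_apply, symm_apply_apply,
      prod_mul_distrib, Equiv.prod_comp π fun i => B i (σ i), map_mul]
    ring
  rw [detWith_of_forall_ne_eq_zero ε hB, detWith, detWith, ← Equiv.sum_comp (Equiv.mulLeft σ),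
    sum_mul]
  exact sum_congr rfl fun π _ => hterm π

end PermSupport

end Matrix

theorem eltAdd_comm {F L : Type*} [LinearOrder F] [AddCommMagma L] (x y : F × L) :
    eltAdd x y = eltAdd y x := by
  unfold eltAdd
  rcases lt_trichotomy x.1 y.1 with h | h | h
  · simp [h, lt_asymm h]
  · simp [h, add_comm]
  · simp [h, lt_asymm h]

theorem eltAdd_assoc {F L : Type*} [LinearOrder F] [AddSemigroup L] (x y z : F × L) :
    eltAdd (eltAdd x y) z = eltAdd x (eltAdd y z) := by
  unfold eltAdd
  split_ifs <;> simp_all [add_assoc] <;> order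

theorem eltMul_comm {F L : Type*} [AddCommMagma F] [CommMagma L] (x y : F × L) :
    eltMul x y = eltMul y x := by
  simp [eltMul, add_comm, mul_comm]

theorem eltMul_eltAdd {F L : Type*} [AddCommMonoid F] [LinearOrder F]
    [IsOrderedCancelAddMonoid F] [Distrib L] (x y z : F × L) :
    eltMul x (eltAdd y z) = eltAdd (eltMul x y) (eltMul x z) := by
  unfold eltAdd eltMul
  split_ifs <;> simp_all [mul_add] <;> order

theorem eltAdd_eltMul {F L : Type*} [AddCommMonoid F] [LinearOrder F]
    [IsOrderedCancelAddMonoid F] [CommSemiring L] (x y z : F × L) :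
    eltMul (eltAdd x y) z = eltAdd (eltMul x z) (eltMul y z) := by
  simp only [eltMul_comm _ z, eltMul_eltAdd]

namespace ELT

variable {F L : Type*}

instance [LinearOrder F] [Add L] : Add (Option (F × L)) := ⟨eAdd⟩
instance [Add F] [Mul L] : Mul (Option (F × L)) := ⟨eMul⟩
instance : Zero (Option (F × L)) := ⟨none⟩
instance [Zero F] [One L] : One (Option (F × L)) := ⟨some (0, 1)⟩

section Add

variable [LinearOrder F] [Add L] (x y : F × L) (a : Option (F × L))

@[simp] theorem none_add : none + a = a := rfl
@[simp] theorem add_none : a + none = a := by cases a <;> rfl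
@[simp] theorem some_add_some : some x + some y = some (eltAdd x y) := rfl

end Add

section Mul

variable [Add F] [Mul L] (x y : F × L) (a : Option (F × L))

@[simp] theorem none_mul : none * a = none := rfl
@[simp] theorem mul_none : a * none = none := by cases a <;> rfl
@[simp] theorem some_mul_some : some x * some y = some (eltMul x y) := rfl

end Mul

@[simp] theorem zero_def : (0 : Option (F × L)) = none := rfl
@[simp] theorem one_def [Zero F] [One L] : (1 : Option (F × L)) = some (0, 1) := rfl

section Semiring

variable [AddCommMonoid F] [LinearOrder F] [IsOrderedCancelAddMonoid F] [CommSemiring L]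

instance : CommSemiring (Option (F × L)) where
  add_assoc a b c := by cases a <;> cases b <;> cases c <;> simp [eltAdd_assoc]
  zero_add _ := rfl
  add_zero := add_none
  add_comm a b := by cases a <;> cases b <;> simp [eltAdd_comm]
  nsmul := nsmulRec
  mul_assoc a b c := by cases a <;> cases b <;> cases c <;> simp [eltMul, add_assoc, mul_assoc]
  one_mul a := by cases a <;> simp [eltMul]
  mul_one a := by cases a <;> simp [eltMul]
  mul_comm a b := by cases a <;> cases b <;> simp [eltMul_comm]
  zero_mul _ := rfl
  mul_zero := mul_none
  left_distrib a b c := by cases a <;> cases b <;> cases c <;> simp [eltMul_eltAdd]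
  right_distrib a b c := by cases a <;> cases b <;> cases c <;> simp [eltAdd_eltMul]

instance : NoZeroDivisors (Option (F × L)) where
  eq_zero_or_eq_zero_of_mul_eq_zero {a b} := by cases a <;> cases b <;> simp

instance : Subsingleton (AddUnits (Option (F × L))) :=
  Subsingleton.addUnits_of_isAddUnit fun a ha => by
    obtain ⟨b, hab, -⟩ := isAddUnit_iff_exists.1 ha
    cases a <;> cases b <;> simp_all

instance : Nontrivial (Option (F × L)) := ⟨⟨0, 1, by simp⟩⟩

theorem eSumF_eq_sum {α : Type*} [Fintype α] (f : α → Option (F × L)) :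
    eSumF f = ∑ x, f x := by
  rw [eSumF, ← sum_map_toList, List.sum_eq_foldr]
  rfl

theorem eProd_eq_prod {k : ℕ} (f : Fin k → Option (F × L)) : eProd f = ∏ i, f i := by
  rw [eProd, ← List.prod_ofFn, List.prod_eq_foldr]
  rfl

end Semiring

variable [AddCommGroup F] [LinearOrder F] [IsOrderedAddMonoid F] [CommRing L] {n : ℕ}

def sign : ℤˣ →* Option (F × L) where
  toFun u := some (0, ((u : ℤ) : L))
  map_one' := by simp
  map_mul' u v := by simp [eltMul]

theorem eMatMul_eq_mul (A B : Matrix (Fin n) (Fin n) (Option (F × L))) : eMatMul A B = A * B :=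
  Matrix.ext fun i j => eSumF_eq_sum fun k => A i k * B k j

theorem eId_eq_one : (eId n : Matrix (Fin n) (Fin n) (Option (F × L))) = 1 := by
  funext i j
  simp [eId, Matrix.one_apply]

theorem eltDet_eq_detWith (A : Matrix (Fin n) (Fin n) (Option (F × L))) :
    eltDet A = A.detWith sign := by
  rw [eltDet, eSumF_eq_sum]
  simp only [eProd_eq_prod]
  rfl

end ELT

/-- If B is invertible in the monoid of matrices over R̄, then
det(AB) = det(A)·det(B). -/
theorem eltDet_mul_of_invertible {F L : Type*} [AddCommGroup F] [LinearOrder F] [IsOrderedAddMonoid F]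
    [CommRing L] {n : ℕ} (A B : Matrix (Fin n) (Fin n) (Option (F × L)))
    (hB : ∃ C : Matrix (Fin n) (Fin n) (Option (F × L)),
      eMatMul B C = eId n ∧ eMatMul C B = eId n) :
    eltDet (eMatMul A B) = eMul (eltDet A) (eltDet B) := by
  obtain ⟨C, hBC, hCB⟩ := hB
  rw [ELT.eMatMul_eq_mul, ELT.eId_eq_one] at hBC hCB
  obtain ⟨σ, hσ⟩ := Matrix.exists_perm_forall_ne_eq_zero_of_mul_eq_one hBC hCB
  simp only [ELT.eMatMul_eq_mul, ELT.eltDet_eq_detWith]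
  exact Matrix.detWith_mul_of_forall_ne_eq_zero ELT.sign A hσ
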